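/- arXiv:2302.04749 — 5 statements merged into one kernel-verified Lean document; each statement's English description precedes it below -/
import Mathlib

section
/- Let X and Y be nonempty finite sets with |X| ≥ 2, and let (h_i)_{i∈I} be a pairwise-independent hash family from X to Y indexed by a nonempty finite set I. Then for every subset S ⊆ X and every y ∈ Y, the fraction of indices i ∈ I for which S ∩ h_i⁻¹(y) is nonempty is at least |S|/|Y| − |S|²/(2|Y|²); that is, |{i ∈ I : ∃ x ∈ S, h_i(x) = y}| ≥ |I| · (|S|/|Y| − |S|²/(2|Y|²)). -/
/-!
The event `∃ x ∈ S, h i x = y` is the union over `x ∈ S` of the events `h i x = y`. Summing the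
pairwise-independence count over the second value shows that each of these events holds for
`|I|/|Y|` indices, and by pairwise independence any two of them hold together for `|I|/|Y|²`
indices. The second Bonferroni inequality, `Σ |A_x| - Σ_{x ≠ x'} |A_x ∩ A_x'| / 2 ≤ |⋃ A_x|`,
then gives the bound, with at most `|S|²` ordered pairs `x ≠ x'`.
-/

open Finset

theorem Finset.sum_offDiag_insert {α M : Type*} [DecidableEq α] [AddCommMonoid M]
    {s : Finset α} {a : α} (ha : a ∉ s) (f : α × α → M) :
    ∑ p ∈ (insert a s).offDiag, f p
      = ∑ p ∈ s.offDiag, f p + ∑ x ∈ s, f (a, x) + ∑ x ∈ s, f (x, a) := by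
  rw [offDiag_insert ha, sum_union, sum_union, singleton_product, product_singleton,
    sum_map, sum_map]
  · rfl
  all_goals
    simp only [disjoint_left, mem_union, mem_offDiag, mem_product, mem_singleton]
    grind

theorem Finset.two_mul_sum_card_le_card_biUnion_add_sum_offDiag {ι α : Type*}
    [DecidableEq ι] [DecidableEq α] (s : Finset ι) (A : ι → Finset α) :
    2 * ∑ x ∈ s, #(A x) ≤ 2 * #(s.biUnion A) + ∑ p ∈ s.offDiag, #(A p.1 ∩ A p.2) := by
  induction s using Finset.induction_on with
  | empty => simp
  | @insert a s ha ih =>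
    have h_left : #(A a ∩ s.biUnion A) ≤ ∑ x ∈ s, #(A a ∩ A x) := by
      rw [inter_biUnion]; exact card_biUnion_le
    have h_right : #(A a ∩ s.biUnion A) ≤ ∑ x ∈ s, #(A x ∩ A a) := by
      simpa only [inter_comm] using h_left
    have h_union := card_union_add_card_inter (A a) (s.biUnion A)
    rw [sum_insert ha, biUnion_insert, sum_offDiag_insert ha]
    dsimp only
    omega

theorem Finset.card_mul_sub_sq_mul_le_card_biUnion {ι α : Type*}
    [DecidableEq ι] [DecidableEq α] (s : Finset ι) (A : ι → Finset α) {a b : ℝ}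
    (ha : ∀ x ∈ s, a ≤ #(A x)) (hb : ∀ x ∈ s, ∀ x' ∈ s, x ≠ x' → #(A x ∩ A x') ≤ b)
    (hb0 : 0 ≤ b) :
    #s * a - #s ^ 2 * b / 2 ≤ #(s.biUnion A) := by
  have h_bonferroni : 2 * ∑ x ∈ s, (#(A x) : ℝ)
      ≤ 2 * #(s.biUnion A) + ∑ p ∈ s.offDiag, (#(A p.1 ∩ A p.2) : ℝ) := by
    exact_mod_cast two_mul_sum_card_le_card_biUnion_add_sum_offDiag s A
  have h_sum : #s * a ≤ ∑ x ∈ s, (#(A x) : ℝ) := by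
    simpa only [nsmul_eq_mul] using card_nsmul_le_sum s _ a ha
  have h_offDiag : ∑ p ∈ s.offDiag, (#(A p.1 ∩ A p.2) : ℝ) ≤ #s ^ 2 * b := by
    have h_card : (#s.offDiag : ℝ) ≤ #s ^ 2 := by
      rw [sq]; exact_mod_cast offDiag_card s ▸ Nat.sub_le _ _
    calc ∑ p ∈ s.offDiag, (#(A p.1 ∩ A p.2) : ℝ) ≤ #s.offDiag * b := by
          simpa only [nsmul_eq_mul] using sum_le_card_nsmul _ _ b fun p hp => by
            obtain ⟨hp₁, hp₂, hne⟩ := mem_offDiag.mp hp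
            exact_mod_cast hb _ hp₁ _ hp₂ hne
      _ ≤ #s ^ 2 * b := by gcongr
  linarith

section HashFamily

variable {I X Y : Type*} [Fintype I] [Fintype Y] [DecidableEq Y]

def IsPairwiseIndependentHashFamily (h : I → X → Y) : Prop :=
  ∀ x x' : X, x ≠ x' → ∀ y y' : Y,
    #{i | h i x = y ∧ h i x' = y'} * Fintype.card Y ^ 2 = Fintype.card I

theorem IsPairwiseIndependentHashFamily.card_filter_mul_card [Nontrivial X] {h : I → X → Y}
    (hh : IsPairwiseIndependentHashFamily h) (x : X) (y : Y) :
    #{i | h i x = y} * Fintype.card Y = Fintype.card I := by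
  obtain ⟨x', hx'⟩ := exists_ne x
  have hq : 0 < Fintype.card Y := Fintype.card_pos_iff.mpr ⟨y⟩
  refine Nat.eq_of_mul_eq_mul_right hq ?_
  calc #{i | h i x = y} * Fintype.card Y * Fintype.card Y
      = ∑ y' : Y, #{i | h i x = y ∧ h i x' = y'} * Fintype.card Y ^ 2 := by
        rw [← sum_mul, card_eq_sum_card_fiberwise (f := fun i => h i x') (t := univ)
          fun _ _ => mem_univ _]
        simp only [filter_filter]; ring
    _ = Fintype.card I * Fintype.card Y := by
        simp [hh x x' hx'.symm, mul_comm]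

end HashFamily

theorem stmt_0_general {X Y I : Type*} [Fintype X] [Fintype Y] [Fintype I]
    [DecidableEq Y]
    (hX : 2 ≤ Fintype.card X)
    (h : I → X → Y)
    (hpair : ∀ x x' : X, x ≠ x' → ∀ y y' : Y,
      (univ.filter (fun i : I => h i x = y ∧ h i x' = y')).card * (Fintype.card Y) ^ 2
        = Fintype.card I)
    (S : Finset X) (y : Y) :
    (Fintype.card I : ℝ) *
        ((S.card : ℝ) / (Fintype.card Y : ℝ)
          - (S.card : ℝ) ^ 2 / (2 * (Fintype.card Y : ℝ) ^ 2))
      ≤ ((univ.filter (fun i : I => ∃ x ∈ S, h i x = y)).card : ℝ) := by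
  classical
  have : Nontrivial X := Fintype.one_lt_card_iff_nontrivial.mp hX
  have hq : (0 : ℝ) < Fintype.card Y := by exact_mod_cast Fintype.card_pos_iff.mpr ⟨y⟩
  set A : X → Finset I := fun x => {i | h i x = y}
  have h_union : ({i | ∃ x ∈ S, h i x = y} : Finset I) = S.biUnion A := by
    ext; simp [A]
  have h_single (x : X) : (Fintype.card I / Fintype.card Y : ℝ) ≤ #(A x) := by
    rw [div_le_iff₀ hq]
    exact_mod_cast (IsPairwiseIndependentHashFamily.card_filter_mul_card hpair x y).ge
  have h_pair (x x' : X) (hne : x ≠ x') :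
      (#(A x ∩ A x') : ℝ) ≤ Fintype.card I / Fintype.card Y ^ 2 := by
    rw [le_div_iff₀ (by positivity), ← filter_and]
    exact_mod_cast (hpair x x' hne y y).le
  have h_bound := S.card_mul_sub_sq_mul_le_card_biUnion _ (fun x _ => h_single x)
    (fun x _ x' _ hne => h_pair x x' hne) (by positivity)
  rw [h_union]
  convert h_bound using 1
  field_simp

/-- Pairwise-independent hash family lower bound for nonempty intersection:
`Pr_i[S ∩ h_i⁻¹(y) ≠ ∅] ≥ |S|/|Y| − |S|²/(2|Y|²)`. -/
theorem stmt_0 {X Y I : Type*} [Fintype X] [Fintype Y] [Fintype I]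
    [DecidableEq X] [DecidableEq Y]
    [Nonempty X] [Nonempty Y] [Nonempty I]
    (hX : 2 ≤ Fintype.card X)
    (h : I → X → Y)
    (hpair : ∀ x x' : X, x ≠ x' → ∀ y y' : Y,
      (univ.filter (fun i : I => h i x = y ∧ h i x' = y')).card * (Fintype.card Y) ^ 2
        = Fintype.card I)
    (S : Finset X) (y : Y) :
    (Fintype.card I : ℝ) *
        ((S.card : ℝ) / (Fintype.card Y : ℝ)
          - (S.card : ℝ) ^ 2 / (2 * (Fintype.card Y : ℝ) ^ 2))
      ≤ ((univ.filter (fun i : I => ∃ x ∈ S, h i x = y)).card : ℝ) :=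
  stmt_0_general hX h hpair S y
end

section
/- Let X and Y be nonempty finite sets with |X| ≥ 2, and let (h_i)_{i∈I} be a pairwise-independent hash family from X to Y indexed by a nonempty finite set I. Then for every subset S ⊆ X and every y ∈ Y, the fraction of indices i ∈ I for which S ∩ h_i⁻¹(y) has exactly one element is at least |S|/|Y| − |S|²/|Y|²; that is, |{i ∈ I : |S ∩ h_i⁻¹(y)| = 1}| ≥ |I| · (|S|/|Y| − |S|²/|Y|²). -/
open Finset

/-! Write `N i = #{x ∈ S | h i x = y}`. Since `[N = 1] ≥ 2N - N²` for every natural number `N`,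
the count of indices with `N i = 1` is at least `2 ∑ N i - ∑ (N i)²`. The first moment `∑ N i` and
the second moment `∑ (N i)²` are sums over `S` and `S × S` of the counts fixed by pairwise
independence, giving `|S| m / q` and `|S| m / q + |S| (|S| - 1) m / q²`, where `m = |I|`, `q = |Y|`. -/

lemma two_mul_sub_sq_le_ite_eq_one (n : ℕ) :
    2 * (n : ℝ) - (n : ℝ) ^ 2 ≤ if n = 1 then 1 else 0 := by
  rcases n with _ | _ | k
  · norm_num
  · norm_num
  · rw [if_neg (by omega)]
    push_cast
    nlinarith [(k.cast_nonneg : (0 : ℝ) ≤ k)]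

lemma Finset.sum_card_filter_sq {I X : Type*} [Fintype I] (S : Finset X) (r : I → X → Prop)
    [∀ i x, Decidable (r i x)] :
    ∑ i, #{x ∈ S | r i x} ^ 2 = ∑ x ∈ S, ∑ x' ∈ S, #{i | r i x ∧ r i x'} := by
  simp only [card_filter, sq, sum_mul_sum, ite_zero_mul_ite_zero, mul_one]
  rw [sum_comm]
  exact sum_congr rfl fun x _ => sum_comm

section PairwiseIndependent

variable {X Y I : Type*} [Fintype Y] [Fintype I] [DecidableEq Y]

def IsPairwiseIndependent (h : I → X → Y) : Prop :=
  ∀ x x' : X, x ≠ x' → ∀ y y' : Y,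
    #{i | h i x = y ∧ h i x' = y'} * Fintype.card Y ^ 2 = Fintype.card I

namespace IsPairwiseIndependent

variable {h : I → X → Y} (hh : IsPairwiseIndependent h)
include hh

lemma card_filter_and {x x' : X} (hne : x ≠ x') (y y' : Y) :
    (#{i | h i x = y ∧ h i x' = y'} : ℝ) = Fintype.card I / Fintype.card Y ^ 2 := by
  have : Nonempty Y := ⟨y⟩
  rw [eq_div_iff (by positivity)]
  exact_mod_cast hh x x' hne y y'

lemma card_filter_eq [Nontrivial X] (x : X) (y : Y) :
    (#{i | h i x = y} : ℝ) = Fintype.card I / Fintype.card Y := by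
  have : Nonempty Y := ⟨y⟩
  obtain ⟨x', hx'⟩ := exists_ne x
  rw [card_eq_sum_card_fiberwise (f := fun i => h i x') (t := univ) fun _ _ => mem_univ _]
  push_cast
  simp only [filter_filter, hh.card_filter_and hx'.symm, sum_const, card_univ, nsmul_eq_mul]
  field_simp

lemma sum_card_filter [Nontrivial X] (S : Finset X) (y : Y) :
    ∑ i, (#{x ∈ S | h i x = y} : ℝ) = #S * (Fintype.card I / Fintype.card Y) := by
  have double_count := sum_card_bipartiteAbove_eq_sum_card_bipartiteBelow (s := univ) (t := S)
    (r := fun i x => h i x = y)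
  simp only [bipartiteAbove, bipartiteBelow] at double_count
  rw [← Nat.cast_sum, double_count]
  push_cast
  simp only [hh.card_filter_eq, sum_const, nsmul_eq_mul]

lemma sum_card_filter_sq [Nontrivial X] [DecidableEq X] (S : Finset X) (y : Y) :
    ∑ i, (#{x ∈ S | h i x = y} : ℝ) ^ 2 =
      #S * (Fintype.card I / Fintype.card Y) +
        #S * (#S - 1) * (Fintype.card I / Fintype.card Y ^ 2) := by
  have row : ∀ x ∈ S, ∑ x' ∈ S, (#{i | h i x = y ∧ h i x' = y} : ℝ) =
      Fintype.card I / Fintype.card Y + (#S - 1) * (Fintype.card I / Fintype.card Y ^ 2) := by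
    intro x hx
    rw [← add_sum_erase _ _ hx]
    simp only [and_self]
    rw [hh.card_filter_eq,
      sum_congr rfl fun x' hx' => hh.card_filter_and (ne_of_mem_erase hx').symm y y,
      sum_const, card_erase_of_mem hx, nsmul_eq_mul, Nat.cast_pred (card_pos.mpr ⟨x, hx⟩)]
  have square := congrArg (Nat.cast (R := ℝ)) (Finset.sum_card_filter_sq S fun i x => h i x = y)
  push_cast at square
  rw [square, sum_congr rfl row, sum_const, nsmul_eq_mul]
  ring

end IsPairwiseIndependent

end PairwiseIndependent

theorem stmt_1_general {X Y I : Type*} [Fintype X] [Fintype Y] [Fintype I]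
    [DecidableEq Y]
    (hX : 2 ≤ Fintype.card X)
    (h : I → X → Y)
    (hpair : ∀ x x' : X, x ≠ x' → ∀ y y' : Y,
      (univ.filter (fun i : I => h i x = y ∧ h i x' = y')).card * (Fintype.card Y) ^ 2
        = Fintype.card I)
    (S : Finset X) (y : Y) :
    (Fintype.card I : ℝ) *
        ((S.card : ℝ) / (Fintype.card Y : ℝ)
          - (S.card : ℝ) ^ 2 / ((Fintype.card Y : ℝ) ^ 2))
      ≤ ((univ.filter (fun i : I => (S.filter (fun x => h i x = y)).card = 1)).card : ℝ) := by
  classical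
  have hh : IsPairwiseIndependent h := hpair
  have : Nontrivial X := Fintype.one_lt_card_iff_nontrivial.mp hX
  set N : I → ℕ := fun i => #{x ∈ S | h i x = y}
  calc (Fintype.card I : ℝ) * (#S / Fintype.card Y - #S ^ 2 / Fintype.card Y ^ 2)
      ≤ 2 * ∑ i, (N i : ℝ) - ∑ i, (N i : ℝ) ^ 2 := by
        rw [hh.sum_card_filter, hh.sum_card_filter_sq, ← sub_nonneg]
        ring_nf
        positivity
    _ = ∑ i, (2 * (N i : ℝ) - (N i : ℝ) ^ 2) := by rw [sum_sub_distrib, mul_sum]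
    _ ≤ ∑ i, if N i = 1 then (1 : ℝ) else 0 :=
        sum_le_sum fun i _ => two_mul_sub_sq_le_ite_eq_one _
    _ = #{i | N i = 1} := by rw [card_filter, Nat.cast_sum]; push_cast; rfl

/-- Pairwise-independent hash family lower bound for a unique preimage in `S`:
`Pr_i[|S ∩ h_i⁻¹(y)| = 1] ≥ |S|/|Y| − |S|²/|Y|²`. -/
theorem stmt_1 {X Y I : Type*} [Fintype X] [Fintype Y] [Fintype I]
    [DecidableEq X] [DecidableEq Y]
    [Nonempty X] [Nonempty Y] [Nonempty I]
    (hX : 2 ≤ Fintype.card X)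
    (h : I → X → Y)
    (hpair : ∀ x x' : X, x ≠ x' → ∀ y y' : Y,
      (univ.filter (fun i : I => h i x = y ∧ h i x' = y')).card * (Fintype.card Y) ^ 2
        = Fintype.card I)
    (S : Finset X) (y : Y) :
    (Fintype.card I : ℝ) *
        ((S.card : ℝ) / (Fintype.card Y : ℝ)
          - (S.card : ℝ) ^ 2 / ((Fintype.card Y : ℝ) ^ 2))
      ≤ ((univ.filter (fun i : I => (S.filter (fun x => h i x = y)).card = 1)).card : ℝ) :=
  stmt_1_general hX h hpair S y
end

section
/- Let ε be a real number with 0 < ε < 1, let ℓ and m be natural numbers with (1+ε)^m ≥ 2^(ℓ+1), and let a, b be natural numbers with (1−ε)·b < a < (1+ε)·b and a ≤ 2^ℓ. Then there exists a natural number j with 0 ≤ j ≤ m−1 such that, setting k = ⌈(1+ε)^j⌉ (the least integer at least (1+ε)^j), the following hold: k ≤ 2a ≤ (1+ε)·k and k/(1+ε) ≤ 2b ≤ ((1+ε)/(1−ε))·k. -/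
/-! The powers `(1+ε)^0, …, (1+ε)^m` bracket every value in `[1, 2^(ℓ+1)]`, in particular
`2a`. If `(1+ε)^j ≤ 2a ≤ (1+ε)^(j+1)` then `k = ⌈(1+ε)^j⌉` still satisfies `k ≤ 2a ≤ (1+ε) k`,
because `2a` is an integer. The bounds for `2b` then follow from the balance
`(1-ε) b < a < (1+ε) b`. -/

theorem exists_pow_le_le_pow_succ {M : Type*} [Monoid M] [LinearOrder M] {r c : M} (n : ℕ)
    (h1 : 1 ≤ c) (h2 : c ≤ r ^ (n + 1)) : ∃ j ≤ n, r ^ j ≤ c ∧ c ≤ r ^ (j + 1) := by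
  induction n with
  | zero => exact ⟨0, le_rfl, by simpa using h1, h2⟩
  | succ n ih =>
    rcases le_or_gt c (r ^ (n + 1)) with h | h
    · obtain ⟨j, hj, hlo, hhi⟩ := ih h
      exact ⟨j, hj.trans n.le_succ, hlo, hhi⟩
    · exact ⟨n + 1, le_rfl, h.le, h2⟩

theorem natCeil_le_and_le_mul_natCeil {r x : ℝ} {n : ℕ} (hr : 0 ≤ r) (hxn : x ≤ n)
    (hnx : (n : ℝ) ≤ r * x) : (⌈x⌉₊ : ℝ) ≤ n ∧ (n : ℝ) ≤ r * ⌈x⌉₊ :=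
  ⟨mod_cast Nat.ceil_le.mpr hxn, hnx.trans (mul_le_mul_of_nonneg_left (Nat.le_ceil x) hr)⟩

theorem bounds_of_balanced {ε a b k : ℝ} (hε0 : 0 < ε) (hε1 : ε < 1)
    (hab1 : (1 - ε) * b < a) (hab2 : a < (1 + ε) * b) (hka : k ≤ 2 * a)
    (hak : 2 * a ≤ (1 + ε) * k) :
    k / (1 + ε) ≤ 2 * b ∧ 2 * b ≤ (1 + ε) / (1 - ε) * k := by
  constructor
  · rw [div_le_iff₀ (by linarith)]
    linarith
  · rw [div_mul_eq_mul_div, le_div_iff₀ (by linarith)]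
    linarith

/-- Approximation lemma: for balanced `a, b` with `a ≤ 2^ℓ`, some grid value
`k = ⌈(1+ε)^j⌉` with `0 ≤ j ≤ m−1` approximates both `2a` and `2b`. -/
theorem stmt_4 (ε : ℝ) (hε0 : 0 < ε) (hε1 : ε < 1) (ℓ m : ℕ)
    (hm : (2 : ℝ) ^ (ℓ + 1) ≤ (1 + ε) ^ m)
    (a b : ℕ)
    (hab1 : (1 - ε) * (b : ℝ) < (a : ℝ))
    (hab2 : (a : ℝ) < (1 + ε) * (b : ℝ))
    (ha : a ≤ 2 ^ ℓ) :
    ∃ j : ℕ, j ≤ m - 1 ∧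
      ((⌈(1 + ε) ^ j⌉₊ : ℝ) ≤ 2 * (a : ℝ)
        ∧ 2 * (a : ℝ) ≤ (1 + ε) * (⌈(1 + ε) ^ j⌉₊ : ℝ))
      ∧ ((⌈(1 + ε) ^ j⌉₊ : ℝ) / (1 + ε) ≤ 2 * (b : ℝ)
        ∧ 2 * (b : ℝ) ≤ (1 + ε) / (1 - ε) * (⌈(1 + ε) ^ j⌉₊ : ℝ)) := by
  have ha_pos : 0 < a := by
    have : (0 : ℝ) ≤ (1 - ε) * b := mul_nonneg (by linarith) b.cast_nonneg
    exact_mod_cast this.trans_lt hab1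
  have h2a_le : (2 * a : ℕ) ≤ (1 + ε) ^ m := by
    calc ((2 * a : ℕ) : ℝ) ≤ 2 * 2 ^ ℓ := by push_cast; gcongr; exact_mod_cast ha
      _ = 2 ^ (ℓ + 1) := by ring
      _ ≤ _ := hm
  obtain ⟨n, rfl⟩ : ∃ n, m = n + 1 := Nat.exists_eq_add_one.mpr <| Nat.pos_of_ne_zero <| by
    rintro rfl
    have : (1 : ℝ) < 2 ^ (ℓ + 1) := one_lt_pow₀ (by norm_num) (by omega)
    simp only [pow_zero] at hm
    linarith
  obtain ⟨j, hjn, hlo, hhi⟩ :=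
    exists_pow_le_le_pow_succ n (by exact_mod_cast (by omega : 1 ≤ 2 * a)) h2a_le
  have hk := natCeil_le_and_le_mul_natCeil (r := 1 + ε) (by linarith) hlo
    (pow_succ' (1 + ε) j ▸ hhi)
  push_cast at hk
  exact ⟨j, by omega, hk, bounds_of_balanced hε0 hε1 hab1 hab2 hk.1 hk.2⟩
end

section
/- Let T be a finite index set, let R, X₀, X₁ : T → ℝ be nonnegative functions, and let ε be a real number with 0 < ε < 1. Define T⁺ = {t ∈ T : (1+ε)·X₁(t) ≤ X₀(t)} and T⁻ = {t ∈ T : X₀(t) ≤ (1−ε)·X₁(t)}. Then (1/2)·Σ_{t∈T⁺} R(t)·(X₀(t) − X₁(t)) + (1/2)·Σ_{t∈T⁻} R(t)·(X₁(t) − X₀(t)) ≥ (ε/(4(1+ε)))·Σ_{t∈T⁺∪T⁻} R(t)·(X₀(t) + X₁(t)). -/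
open Finset

/-! Pointwise, a transcript in `T⁺` or `T⁻` has gap `d = |X₀ - X₁| ≥ ε X₁`, so
`X₀ + X₁ ≤ 2 X₁ + d ≤ (2/ε + 1) d`, and `ε/(4(1+ε)) · (2/ε + 1) ≤ 1/2`. Summing with weights `R`
gives the inequality; a transcript lying in both sets has `X₀ = X₁ = 0`, so the
overlap costs nothing. -/

lemma mul_two_mul_add_le_half {ε y d : ℝ} (hε : 0 < ε) (hy : 0 ≤ y) (hd : ε * y ≤ d) :
    ε / (4 * (1 + ε)) * (2 * y + d) ≤ d / 2 := by
  have hd0 : 0 ≤ d := le_trans (by positivity) hd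
  rw [div_mul_eq_mul_div, div_le_div_iff₀ (by positivity) two_pos]
  nlinarith [mul_nonneg hε.le hd0]

lemma mul_add_le_half_sub_of_mul_le {ε x₀ x₁ : ℝ} (hε : 0 < ε) (hx₁ : 0 ≤ x₁)
    (h : (1 + ε) * x₁ ≤ x₀) :
    ε / (4 * (1 + ε)) * (x₀ + x₁) ≤ 1 / 2 * (x₀ - x₁) := by
  have := mul_two_mul_add_le_half hε hx₁ (d := x₀ - x₁) (by linarith)
  convert this using 1 <;> ring

lemma mul_add_le_half_sub_of_le_mul {ε x₀ x₁ : ℝ} (hε : 0 < ε) (hx₁ : 0 ≤ x₁)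
    (h : x₀ ≤ (1 - ε) * x₁) :
    ε / (4 * (1 + ε)) * (x₀ + x₁) ≤ 1 / 2 * (x₁ - x₀) := by
  have hgap : ε * x₁ ≤ x₁ - x₀ := by linarith
  calc ε / (4 * (1 + ε)) * (x₀ + x₁)
      ≤ ε / (4 * (1 + ε)) * (2 * x₁ + (x₁ - x₀)) := by
        refine mul_le_mul_of_nonneg_left ?_ (by positivity)
        linarith [mul_nonneg hε.le hx₁]
    _ ≤ 1 / 2 * (x₁ - x₀) := by linarith [mul_two_mul_add_le_half hε hx₁ hgap]

lemma mul_ite_or_le_half_add_half {ε r x₀ x₁ : ℝ} (hε : 0 < ε) (hr : 0 ≤ r) (hx₁ : 0 ≤ x₁) :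
    ε / (4 * (1 + ε)) *
        (if (1 + ε) * x₁ ≤ x₀ ∨ x₀ ≤ (1 - ε) * x₁ then r * (x₀ + x₁) else 0)
      ≤ 1 / 2 * (if (1 + ε) * x₁ ≤ x₀ then r * (x₀ - x₁) else 0)
        + 1 / 2 * (if x₀ ≤ (1 - ε) * x₁ then r * (x₁ - x₀) else 0) := by
  have hscale : ∀ {a b : ℝ}, ε / (4 * (1 + ε)) * a ≤ 1 / 2 * b →
      ε / (4 * (1 + ε)) * (r * a) ≤ 1 / 2 * (r * b) := fun hab => by
    rw [mul_left_comm, mul_left_comm (1 / 2)]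
    exact mul_le_mul_of_nonneg_left hab hr
  by_cases hp : (1 + ε) * x₁ ≤ x₀ <;> by_cases hq : x₀ ≤ (1 - ε) * x₁ <;>
    simp only [hp, hq, or_true, true_or, or_self, if_true, if_false, mul_zero, add_zero,
      zero_add, le_refl]
  · have hpq := hscale (mul_add_le_half_sub_of_mul_le hε hx₁ hp)
    have hq0 : 0 ≤ r * (x₁ - x₀) := mul_nonneg hr (by linarith [mul_nonneg hε.le hx₁])
    linarith
  · exact hscale (mul_add_le_half_sub_of_mul_le hε hx₁ hp)
  · exact hscale (mul_add_le_half_sub_of_le_mul hε hx₁ hq)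

theorem stmt_6_general {T : Type*} [Fintype T] (R X₀ X₁ : T → ℝ)
    (hR : ∀ t, 0 ≤ R t) (h1 : ∀ t, 0 ≤ X₁ t)
    (ε : ℝ) (hε0 : 0 < ε) :
    (ε / (4 * (1 + ε))) *
        ∑ t ∈ univ.filter (fun t => (1 + ε) * X₁ t ≤ X₀ t ∨ X₀ t ≤ (1 - ε) * X₁ t),
          R t * (X₀ t + X₁ t)
      ≤ (1 / 2) * (∑ t ∈ univ.filter (fun t => (1 + ε) * X₁ t ≤ X₀ t), R t * (X₀ t - X₁ t))
        + (1 / 2) * (∑ t ∈ univ.filter (fun t => X₀ t ≤ (1 - ε) * X₁ t), R t * (X₁ t - X₀ t)) := by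
  simp only [sum_filter, mul_sum, ← sum_add_distrib]
  exact sum_le_sum fun t _ => mul_ite_or_le_half_add_half hε0 (hR t) (h1 t)

/-- Key inequality in the proof that statistical hiding forces nearly-equal consistent-seed
sets: the distinguishing advantage of the receiver lower-bounds the mass of unbalanced
transcripts. -/
theorem stmt_6 {T : Type*} [Fintype T] (R X₀ X₁ : T → ℝ)
    (hR : ∀ t, 0 ≤ R t) (h0 : ∀ t, 0 ≤ X₀ t) (h1 : ∀ t, 0 ≤ X₁ t)
    (ε : ℝ) (hε0 : 0 < ε) (hε1 : ε < 1) :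
    (ε / (4 * (1 + ε))) *
        ∑ t ∈ univ.filter (fun t => (1 + ε) * X₁ t ≤ X₀ t ∨ X₀ t ≤ (1 - ε) * X₁ t),
          R t * (X₀ t + X₁ t)
      ≤ (1 / 2) * (∑ t ∈ univ.filter (fun t => (1 + ε) * X₁ t ≤ X₀ t), R t * (X₀ t - X₁ t))
        + (1 / 2) * (∑ t ∈ univ.filter (fun t => X₀ t ≤ (1 - ε) * X₁ t), R t * (X₁ t - X₀ t)) :=
  stmt_6_general R X₀ X₁ hR h1 ε hε0
end

section
/- Let T be a finite index set, let R, X₀, X₁ : T → ℝ be nonnegative functions, and let ε be a real number with 0 < ε < 1. Define T_good = {t ∈ T : (1−ε)·X₁(t) < X₀(t) < (1+ε)·X₁(t)}. Then Σ_{t∈T_good} R(t)·(X₀(t) + X₁(t)) ≥ Σ_{t∈T} R(t)·(X₀(t) + X₁(t)) − (2(1+ε)/ε)·Σ_{t∈T} R(t)·|X₀(t) − X₁(t)|. -/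
open Finset

/-!
Off the balanced set, `X₀` and `X₁` differ by at least an `ε`-fraction of `X₁`, so
`ε (X₀ + X₁) ≤ 2 (1 + ε) |X₀ - X₁|` there; weighting by `R` and summing bounds the mass of the
unbalanced transcripts by `(2 (1 + ε) / ε) ∑ R |X₀ - X₁|`.
-/

lemma mul_add_le_mul_abs_sub_of_not_balanced {a b ε : ℝ} (hb : 0 ≤ b) (hε : 0 ≤ ε)
    (h : ¬((1 - ε) * b < a ∧ a < (1 + ε) * b)) :
    ε * (a + b) ≤ 2 * (1 + ε) * |a - b| := by
  rcases not_and_or.mp h with hlow | hhigh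
  · have hgap : ε * b ≤ b - a := by linarith [not_lt.mp hlow]
    have habs : b - a ≤ |a - b| := by rw [abs_sub_comm]; exact le_abs_self _
    nlinarith [mul_nonneg hε hb]
  · have hgap : ε * b ≤ a - b := by linarith [not_lt.mp hhigh]
    nlinarith [le_abs_self (a - b), mul_nonneg hε hb]

lemma sum_sub_mul_sum_le_sum_filter {ι : Type*} (s : Finset ι) (p : ι → Prop) [DecidablePred p]
    {f g : ι → ℝ} {c : ℝ} (hc : 0 ≤ c) (hg : ∀ i ∈ s, 0 ≤ g i)
    (hfg : ∀ i ∈ s, ¬p i → f i ≤ c * g i) :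
    ∑ i ∈ s, f i - c * ∑ i ∈ s, g i ≤ ∑ i ∈ s with p i, f i := by
  have hbad : ∑ i ∈ s with ¬p i, f i ≤ c * ∑ i ∈ s, g i :=
    calc ∑ i ∈ s with ¬p i, f i
        ≤ ∑ i ∈ s with ¬p i, c * g i := sum_le_sum fun i hi => by
          rw [mem_filter] at hi; exact hfg i hi.1 hi.2
      _ ≤ ∑ i ∈ s, c * g i :=
          sum_le_sum_of_subset_of_nonneg (filter_subset _ _) fun i hi _ => mul_nonneg hc (hg i hi)
      _ = c * ∑ i ∈ s, g i := (mul_sum _ _ _).symm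
  linarith [sum_filter_add_sum_filter_not s p f]

theorem stmt_7_general {T : Type*} [Fintype T] (R X₀ X₁ : T → ℝ)
    (hR : ∀ t, 0 ≤ R t) (h1 : ∀ t, 0 ≤ X₁ t)
    (ε : ℝ) (hε0 : 0 < ε) :
    (∑ t : T, R t * (X₀ t + X₁ t))
        - (2 * (1 + ε) / ε) * ∑ t : T, R t * |X₀ t - X₁ t|
      ≤ ∑ t ∈ univ.filter (fun t => (1 - ε) * X₁ t < X₀ t ∧ X₀ t < (1 + ε) * X₁ t),
          R t * (X₀ t + X₁ t) := by
  refine sum_sub_mul_sum_le_sum_filter _ _ (by positivity)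
    (fun t _ => mul_nonneg (hR t) (abs_nonneg _)) fun t _ hunbal => ?_
  have hpoint : X₀ t + X₁ t ≤ 2 * (1 + ε) / ε * |X₀ t - X₁ t| := by
    rw [div_mul_eq_mul_div, le_div_iff₀ hε0, mul_comm]
    exact mul_add_le_mul_abs_sub_of_not_balanced (h1 t) hε0.le hunbal
  calc R t * (X₀ t + X₁ t) ≤ R t * (2 * (1 + ε) / ε * |X₀ t - X₁ t|) :=
        mul_le_mul_of_nonneg_left hpoint (hR t)
    _ = 2 * (1 + ε) / ε * (R t * |X₀ t - X₁ t|) := by ring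

/-- Balanced transcripts carry all but a small fraction of the total mass: the mass of
`T_good` is at least the total mass minus `(2(1+ε)/ε)` times the statistical-distance term. -/
theorem stmt_7 {T : Type*} [Fintype T] (R X₀ X₁ : T → ℝ)
    (hR : ∀ t, 0 ≤ R t) (h0 : ∀ t, 0 ≤ X₀ t) (h1 : ∀ t, 0 ≤ X₁ t)
    (ε : ℝ) (hε0 : 0 < ε) (hε1 : ε < 1) :
    (∑ t : T, R t * (X₀ t + X₁ t))
        - (2 * (1 + ε) / ε) * ∑ t : T, R t * |X₀ t - X₁ t|
      ≤ ∑ t ∈ univ.filter (fun t => (1 - ε) * X₁ t < X₀ t ∧ X₀ t < (1 + ε) * X₁ t),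
          R t * (X₀ t + X₁ t) :=
  stmt_7_general R X₀ X₁ hR h1 ε hε0
end
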